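/- Let S ∈ ℝ^{2m×2} have linearly independent columns s and t. Among all matrices D⁻¹ = [[c⁻¹, −f],[0, c]] with c > 0, the Frobenius norm ‖S D⁻¹‖_F is minimized for c̆ = ‖s‖₂/(det(SᵀS))^{1/4} and f̆ = (sᵀt)/(‖s‖₂ (det(SᵀS))^{1/4}), and the minimal value is ‖S D̆⁻¹‖_F = √2 · δ with δ = (det(SᵀS))^{1/4}. -/

import Mathlib

/-!
Write `a = ‖s‖²`, `b = sᵀt`, `d = ‖t‖²`, so that `det (SᵀS) = a d - b² = δ⁴ > 0` and
`‖S D⁻¹‖_F² = Q(c, f) = a / c² + f² a - 2 f c b + c² d`. The identity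
`a c² (Q(c, f) - 2δ²) = (a - c²δ²)² + c² (a f - c b)²` shows `Q ≥ 2δ²`, with equality exactly when
`c² = a / δ²` and `f = c b / a`, i.e. at `(c̆, f̆)`.
-/

open Matrix

noncomputable def enorm' {m : ℕ} (v : Fin m → ℝ) : ℝ := Real.sqrt (∑ i, v i ^ 2)

noncomputable def frob {m n : ℕ} (A : Matrix (Fin m) (Fin n) ℝ) : ℝ :=
  Real.sqrt (∑ i, ∑ j, A i j ^ 2)

noncomputable def specNorm {m n : ℕ} (A : Matrix (Fin m) (Fin n) ℝ) : ℝ :=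
  ‖(Matrix.toEuclideanLin A).toContinuousLinearMap‖

noncomputable def sigmaMax (B : Matrix (Fin 2) (Fin 2) ℝ) : ℝ :=
  Real.sqrt (max ((Matrix.isHermitian_iff_isSymm.mpr (Matrix.isSymm_transpose_mul_self B)).eigenvalues 0)
                 ((Matrix.isHermitian_iff_isSymm.mpr (Matrix.isSymm_transpose_mul_self B)).eigenvalues 1))

noncomputable def sigmaMin (B : Matrix (Fin 2) (Fin 2) ℝ) : ℝ :=
  Real.sqrt (min ((Matrix.isHermitian_iff_isSymm.mpr (Matrix.isSymm_transpose_mul_self B)).eigenvalues 0)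
                 ((Matrix.isHermitian_iff_isSymm.mpr (Matrix.isSymm_transpose_mul_self B)).eigenvalues 1))

section TwoColumns

variable {n : Type*} [Fintype n] (S : Matrix n (Fin 2) ℝ)

theorem det_transpose_mul_self_fin_two :
    (Sᵀ * S).det = (∑ i, S i 0 ^ 2) * (∑ i, S i 1 ^ 2) - (∑ i, S i 0 * S i 1) ^ 2 := by
  simp only [det_fin_two, mul_apply, transpose_apply, sq]
  simp only [mul_comm (S _ 1) (S _ 0)]

theorem det_transpose_mul_self_pos (hS : LinearIndependent ℝ S.col) : 0 < (Sᵀ * S).det :=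
  (PosDef.conjTranspose_mul_self S (mulVec_injective_iff.mpr hS)).det_pos

theorem sum_sq_mul_scaling (c f : ℝ) :
    ∑ i, ∑ j, (S * !![c⁻¹, -f; 0, c]) i j ^ 2 =
      (∑ i, S i 0 ^ 2) / c ^ 2 +
        (f ^ 2 * ∑ i, S i 0 ^ 2 - 2 * f * c * ∑ i, S i 0 * S i 1 + c ^ 2 * ∑ i, S i 1 ^ 2) := by
  simp only [Finset.mul_sum, Finset.sum_div, ← Finset.sum_sub_distrib, ← Finset.sum_add_distrib]
  refine Finset.sum_congr rfl fun i _ => ?_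
  simp only [mul_apply, of_apply, cons_val', cons_val_fin_one, Fin.sum_univ_two, cons_val_zero,
    cons_val_one, mul_zero, add_zero, mul_neg]
  ring

end TwoColumns

section Quadratic

variable {a b d δ : ℝ}

theorem two_mul_sq_le_of_pow_four_eq (ha : 0 < a) (hδ : δ ^ 4 = a * d - b ^ 2) {c : ℝ}
    (hc : c ≠ 0) (f : ℝ) :
    2 * δ ^ 2 ≤ a / c ^ 2 + (f ^ 2 * a - 2 * f * c * b + c ^ 2 * d) := by
  have hc2 : 0 < c ^ 2 := by positivity
  have key : a * c ^ 2 * (a / c ^ 2 + (f ^ 2 * a - 2 * f * c * b + c ^ 2 * d) - 2 * δ ^ 2) =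
      (a - c ^ 2 * δ ^ 2) ^ 2 + c ^ 2 * (a * f - c * b) ^ 2 := by
    field_simp
    linear_combination (-c ^ 4) * hδ
  have hprod :
      0 ≤ a * c ^ 2 * (a / c ^ 2 + (f ^ 2 * a - 2 * f * c * b + c ^ 2 * d) - 2 * δ ^ 2) := by
    rw [key]; positivity
  exact sub_nonneg.mp ((mul_nonneg_iff_of_pos_left (mul_pos ha hc2)).mp hprod)

theorem eq_two_mul_sq_of_pow_four_eq (ha : 0 < a) (hδ0 : δ ≠ 0) (hδ : δ ^ 4 = a * d - b ^ 2) :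
    a / (√a / δ) ^ 2 + ((b / (√a * δ)) ^ 2 * a - 2 * (b / (√a * δ)) * (√a / δ) * b +
      (√a / δ) ^ 2 * d) = 2 * δ ^ 2 := by
  have hsa : √a ^ 2 = a := Real.sq_sqrt ha.le
  have hsa0 : √a ≠ 0 := (Real.sqrt_pos.mpr ha).ne'
  field_simp
  rw [show √a ^ 4 = (√a ^ 2) ^ 2 by ring, hsa]
  linear_combination (-a) * hδ

end Quadratic

theorem optimal_column_scaling_min {m : ℕ} (S : Matrix (Fin (2*m)) (Fin 2) ℝ)
    (hSI : LinearIndependent ℝ ![fun i => S i 0, fun i => S i 1])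
    (δ cb fb : ℝ)
    (hδ : δ = Real.sqrt (Real.sqrt (Sᵀ * S).det))
    (hcb : cb = enorm' (fun i => S i 0) / δ)
    (hfb : fb = (∑ i, S i 0 * S i 1) / (enorm' (fun i => S i 0) * δ)) :
    frob (S * (!![cb⁻¹, -fb; 0, cb] : Matrix (Fin 2) (Fin 2) ℝ)) = Real.sqrt 2 * δ ∧
    (∀ c f : ℝ, 0 < c →
      Real.sqrt 2 * δ ≤ frob (S * (!![c⁻¹, -f; 0, c] : Matrix (Fin 2) (Fin 2) ℝ))) := by
  have hcol : LinearIndependent ℝ S.col := by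
    convert hSI using 1
    ext j i
    fin_cases j <;> rfl
  have hdet_pos := det_transpose_mul_self_pos S hcol
  have hdet := det_transpose_mul_self_fin_two S
  set a := ∑ i, S i 0 ^ 2
  set b := ∑ i, S i 0 * S i 1
  set d := ∑ i, S i 1 ^ 2
  -- `a d = b² + det (SᵀS) > 0` with `a, d ≥ 0`
  have ha : 0 < a := by
    have : 0 ≤ a := Finset.sum_nonneg fun i _ => sq_nonneg _
    have : 0 ≤ d := Finset.sum_nonneg fun i _ => sq_nonneg _
    nlinarith [sq_nonneg b]
  have hδ_pos : 0 < δ := hδ ▸ Real.sqrt_pos.mpr (Real.sqrt_pos.mpr hdet_pos)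
  have hδ4 : δ ^ 4 = a * d - b ^ 2 := by
    rw [hδ, ← hdet, show 4 = 2 * 2 from rfl, pow_mul, Real.sq_sqrt (Real.sqrt_nonneg _),
      Real.sq_sqrt hdet_pos.le]
  have hsqrt : √(2 * δ ^ 2) = √2 * δ := by
    rw [Real.sqrt_mul zero_le_two, Real.sqrt_sq hδ_pos.le]
  refine ⟨?_, fun c f hc => ?_⟩
  · rw [frob, sum_sq_mul_scaling, hcb, hfb, enorm', eq_two_mul_sq_of_pow_four_eq ha hδ_pos.ne' hδ4,
      hsqrt]
  · rw [frob, sum_sq_mul_scaling, ← hsqrt]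
    exact Real.sqrt_le_sqrt (two_mul_sq_le_of_pow_four_eq ha hδ4 hc.ne' f)
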